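/- For all x ∈ (0, π), the P1–P1 normalized phase speed is strictly smaller than the P1–P0 one: (sin x / x)·(3/(2 + cos x)) < (sin(x/2)/(x/2))·sqrt(3/(2 + cos x)). -/

import Mathlib

/-! With `c = cos (x/2)` we have `sin x / x = (sin (x/2) / (x/2)) · c` and `2 + cos x = 1 + 2c²`,
so after cancelling the positive factor `sin (x/2) / (x/2)` the claim reads `c·r < √r` for
`r = 3 / (1 + 2c²)`, i.e. `c²·r < 1`, i.e. `3c² < 1 + 2c²`, which is `c² < 1`. -/

open Real

theorem sin_div_eq_sin_half_div_mul_cos_half (x : ℝ) :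
    sin x / x = sin (x / 2) / (x / 2) * cos (x / 2) := by
  have h : sin x = 2 * sin (x / 2) * cos (x / 2) := by
    rw [← sin_two_mul, mul_div_cancel₀ x two_ne_zero]
  rw [h]
  ring

theorem two_add_cos_eq (x : ℝ) : 2 + cos x = 1 + 2 * cos (x / 2) ^ 2 := by
  rw [cos_sq, mul_div_cancel₀ x two_ne_zero]
  ring

theorem cos_sq_lt_one_of_sin_ne_zero {y : ℝ} (h : sin y ≠ 0) : cos y ^ 2 < 1 := by
  rw [cos_sq']
  linarith [pow_pos (abs_pos.2 h) 2, sq_abs (sin y)]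

theorem mul_three_div_lt_sqrt {c : ℝ} (hc : c ^ 2 < 1) :
    c * (3 / (1 + 2 * c ^ 2)) < √(3 / (1 + 2 * c ^ 2)) := by
  set r := 3 / (1 + 2 * c ^ 2) with hr
  have hr0 : 0 < r := by positivity
  have hcr : c ^ 2 * r < 1 := by
    rw [hr, mul_div_assoc', div_lt_one (by positivity)]
    linarith
  have hcs : c * √r < 1 :=
    calc c * √r ≤ |c| * √r := by gcongr; exact le_abs_self c
      _ = √(c ^ 2 * r) := by rw [sqrt_mul (sq_nonneg c), sqrt_sq_eq_abs]
      _ < 1 := (sqrt_lt' one_pos).2 (by rwa [one_pow])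
  calc c * r = c * √r * √r := by rw [mul_assoc, mul_self_sqrt hr0.le]
    _ < 1 * √r := by gcongr
    _ = √r := one_mul _

theorem stmt_19 (x : ℝ) (hx : x ∈ Set.Ioo (0 : ℝ) Real.pi) :
    (Real.sin x / x) * (3 / (2 + Real.cos x))
      < (Real.sin (x / 2) / (x / 2)) * Real.sqrt (3 / (2 + Real.cos x)) := by
  obtain ⟨hx0, hxpi⟩ := hx
  have hsin : 0 < sin (x / 2) := sin_pos_of_pos_of_lt_pi (by linarith) (by linarith)
  rw [sin_div_eq_sin_half_div_mul_cos_half, two_add_cos_eq, mul_assoc]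
  exact mul_lt_mul_of_pos_left (mul_three_div_lt_sqrt (cos_sq_lt_one_of_sin_ne_zero hsin.ne'))
    (by positivity)
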